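/- arXiv:1606.02660 — 2 statements merged into one kernel-verified Lean document; each statement's English description precedes it below -/
import Mathlib

section
/- Let p, q ≥ 1 and G a graph with n vertices and m edges. Then hom(G, S°(p,q)) ≤ hom(L(n,m), S°(p,q)), where L(n,m) is the lex graph. -/
/-- Number of homomorphisms from a simple graph `G` to a graph-with-loops given
by an adjacency relation `H`. -/
noncomputable def homCount {V W : Type*} (G : SimpleGraph V) (H : W → W → Prop) : ℕ :=
  Nat.card {f : V → W // ∀ a b, G.Adj a b → H (f a) (f b)}

/-- Number of independent sets of a simple graph (including the empty set). -/
noncomputable def indCount {V : Type*} (G : SimpleGraph V) : ℕ :=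
  Nat.card {s : Finset V // ∀ a ∈ s, ∀ b ∈ s, ¬ G.Adj a b}

/-- Number of edges of a simple graph. -/
noncomputable def edgeCount {V : Type*} (G : SimpleGraph V) : ℕ := Nat.card G.edgeSet

/-- The lex graph `L(n,m)`: edges are the first `m` pairs in lexicographic order. -/
def lexGraph (n m : ℕ) : SimpleGraph (Fin n) where
  Adj a b := a ≠ b ∧
    (min a.val b.val) * (n - 1) - (min a.val b.val) * ((min a.val b.val) - 1) / 2
      + (max a.val b.val - min a.val b.val - 1) < m
  symm := by
    constructor
    intro a b h
    obtain ⟨h1, h2⟩ := h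
    refine ⟨h1.symm, ?_⟩
    rwa [min_comm, max_comm]
  loopless := by constructor; intro a h; exact h.1 rfl

/-- Disjoint union of a graph with `r` isolated vertices. -/
def addIsolates {V : Type*} (G : SimpleGraph V) (r : ℕ) : SimpleGraph (V ⊕ Fin r) where
  Adj x y := ∃ a b, x = Sum.inl a ∧ y = Sum.inl b ∧ G.Adj a b
  symm := by constructor; rintro x y ⟨a, b, rfl, rfl, h⟩; exact ⟨b, a, rfl, rfl, h.symm⟩
  loopless := by
    constructor
    rintro x ⟨a, b, rfl, h1, h2⟩
    cases Sum.inl.inj h1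
    exact G.loopless.irrefl a h2

/-- The graph `J` (loop-threshold code 010): vertex 0 is isolated, vertex 1 is
unlooped and adjacent to vertex 2, which is looped. -/
def Jrel : Fin 3 → Fin 3 → Prop := fun x y =>
  (x = 1 ∧ y = 2) ∨ (x = 2 ∧ y = 1) ∨ (x = 2 ∧ y = 2)

open Classical in
/-- The independence polynomial of a graph. -/
noncomputable def indPoly {V : Type*} [Fintype V] (G : SimpleGraph V) (x : ℝ) : ℝ :=
  ∑ s ∈ Finset.univ.filter (fun s : Finset V => ∀ a ∈ s, ∀ b ∈ s, ¬ G.Adj a b), x ^ s.card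

/-!
A map `f : Fin n → S°(p,q)` is a homomorphism exactly when the vertices sent to the unlooped part
form an independent set, so `hom(G, S°(p,q)) = ∑ₖ iₖ(G) pⁿ⁻ᵏ qᵏ`, where `iₖ(G)` counts the
independent `k`-sets. It therefore suffices that `L(n,m)` maximises every `iₖ`.

A `k`-set fails to be independent iff it contains an edge. Applying `s ↦ (rev s)ᶜ`, the dependent
`k`-sets become the `(k-2)`-fold shadow of the family `{(rev e)ᶜ}` of `(n-2)`-sets indexed by the
edges `e`. For `L(n,m)` this family is an initial segment of colex, so by Kruskal–Katona its
shadows are the smallest among graphs with at least `m` edges.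
-/

open Finset Finset.Colex SimpleGraph
open scoped FinsetFamily

section SplitGraph

variable {V W : Type*}

/-- The adjacency of `S°(#Uᶜ, #U)`: `Uᶜ` is the looped clique and `U` the independent part. -/
def splitAdj (U : Finset W) (x y : W) : Prop := x ∉ U ∨ y ∉ U

lemma isHom_splitAdj_iff [Fintype V] [DecidableEq W] (G : SimpleGraph V) (U : Finset W)
    (f : V → W) :
    (∀ a b, G.Adj a b → splitAdj U (f a) (f b)) ↔ G.IsIndepSet ({v | f v ∈ U} : Finset V) := by
  simp only [splitAdj, isIndepSet_iff, Set.Pairwise, coe_filter, mem_univ, true_and,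
    Set.mem_ofPred_eq]
  exact ⟨fun h x hx y hy _ hxy => (h x y hxy).elim (· hx) (· hy),
    fun h a b hab => not_and_or.1 fun ⟨ha, hb⟩ => h ha hb hab.ne hab⟩

variable [Fintype V] [DecidableEq V]

lemma card_filter_forall_mem_iff [Fintype W] [DecidableEq W] (U : Finset W) (s : Finset V) :
    #{f : V → W | ∀ v, f v ∈ U ↔ v ∈ s} = #U ^ #s * #Uᶜ ^ #sᶜ := by
  have : ({f : V → W | ∀ v, f v ∈ U ↔ v ∈ s} : Finset _) =
      Fintype.piFinset fun v => if v ∈ s then U else Uᶜ := by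
    ext f
    simp only [mem_filter, mem_univ, true_and, Fintype.mem_piFinset]
    refine forall_congr' fun v => ?_
    by_cases hv : v ∈ s <;> simp [hv]
  rw [this, Fintype.card_piFinset, prod_apply_ite, prod_const, prod_const]
  simp only [filter_univ_mem, ← compl_filter]

variable (G : SimpleGraph V) [DecidableRel G.Adj]

lemma sum_isIndepSet_eq_sum_card_indepSetFinset (w : ℕ → ℕ) :
    ∑ s ∈ univ.filter fun s : Finset V => G.IsIndepSet (s : Set V), w #s
      = ∑ k ∈ range (Fintype.card V + 1), #(G.indepSetFinset k) * w k := by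
  rw [← sum_fiberwise_of_maps_to (g := card) (t := range (Fintype.card V + 1))
    fun s _ => mem_range_succ_iff.2 (card_le_univ s)]
  refine sum_congr rfl fun k _ => ?_
  rw [sum_congr rfl fun s hs => congrArg w (mem_filter.1 hs).2, sum_const, smul_eq_mul,
    filter_filter]
  congr 2
  ext s
  simp [isNIndepSet_iff]

lemma homCount_splitAdj [Fintype W] [DecidableEq W] (U : Finset W) :
    homCount G (splitAdj U)
      = ∑ k ∈ range (Fintype.card V + 1),
          #(G.indepSetFinset k) * (#U ^ k * #Uᶜ ^ (Fintype.card V - k)) := by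
  rw [← sum_isIndepSet_eq_sum_card_indepSetFinset, homCount, Nat.card_congr
    (Equiv.subtypeEquivRight (isHom_splitAdj_iff G U)), Nat.card_eq_fintype_card,
    Fintype.card_subtype]
  rw [card_eq_sum_card_fiberwise (f := fun f : V → W => ({v | f v ∈ U} : Finset V))
    (t := univ.filter fun s : Finset V => G.IsIndepSet (s : Set V)) fun f hf => by simpa using hf]
  refine sum_congr rfl fun s hs => ?_
  rw [← card_compl, ← card_filter_forall_mem_iff, filter_filter]
  congr 1
  ext f
  simp only [mem_filter, mem_univ, true_and]
  constructor
  · rintro ⟨-, rfl⟩ v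
    simp
  · intro h
    have hf : ({v | f v ∈ U} : Finset V) = s := by ext; simp [h]
    exact ⟨hf ▸ (mem_filter.1 hs).2, hf⟩

end SplitGraph

lemma Sym2.toFinset_injective {α : Type*} [DecidableEq α] :
    Function.Injective (Sym2.toFinset : Sym2 α → Finset α) := fun _ _ h =>
  Sym2.ext fun x => by rw [← Sym2.mem_toFinset, h, Sym2.mem_toFinset]

namespace SimpleGraph

variable {V : Type*} [Fintype V] [DecidableEq V] (G : SimpleGraph V) [DecidableRel G.Adj]

def edgeSets : Finset (Finset V) := G.edgeFinset.map ⟨Sym2.toFinset, Sym2.toFinset_injective⟩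

variable {G}

lemma mem_edgeSets {s : Finset V} : s ∈ G.edgeSets ↔ ∃ a b, G.Adj a b ∧ {a, b} = s := by
  simp [edgeSets, Sym2.exists, Sym2.toFinset_mk_eq]

lemma mem_edgeSets_iff_exists_lt [LinearOrder V] {s : Finset V} :
    s ∈ G.edgeSets ↔ ∃ a b, a < b ∧ G.Adj a b ∧ {a, b} = s := by
  refine mem_edgeSets.trans ⟨?_, fun ⟨a, b, _, hab, hs⟩ => ⟨a, b, hab, hs⟩⟩
  rintro ⟨a, b, hab, rfl⟩
  rcases hab.ne.lt_or_gt with h | h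
  · exact ⟨a, b, h, hab, rfl⟩
  · exact ⟨b, a, h, hab.symm, pair_comm _ _⟩

lemma card_edgeSets : #G.edgeSets = #G.edgeFinset := card_map _

lemma card_of_mem_edgeSets {s : Finset V} (hs : s ∈ G.edgeSets) : #s = 2 := by
  obtain ⟨a, b, hab, rfl⟩ := mem_edgeSets.1 hs
  exact card_pair hab.ne

lemma not_isIndepSet_iff_exists_edgeSets_subset {t : Finset V} :
    ¬ G.IsIndepSet (t : Set V) ↔ ∃ e ∈ G.edgeSets, e ⊆ t := by
  simp only [isIndepSet_iff, Set.Pairwise, mem_coe, not_forall, not_not, mem_edgeSets]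
  constructor
  · rintro ⟨a, ha, b, hb, -, hab⟩
    exact ⟨_, ⟨a, b, hab, rfl⟩, insert_subset ha (singleton_subset_iff.2 hb)⟩
  · rintro ⟨_, ⟨a, b, hab, rfl⟩, he⟩
    exact ⟨a, he (mem_insert_self _ _), b, he (by simp), hab.ne, hab⟩

variable (G)

lemma card_indepSetFinset_of_lt_two {k : ℕ} (hk : k < 2) :
    #(G.indepSetFinset k) = (Fintype.card V).choose k := by
  rw [← card_univ, ← card_powersetCard]
  congr 1
  ext t
  simp only [mem_indepSetFinset_iff, isNIndepSet_iff, mem_powersetCard_univ, and_iff_right_iff_imp]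
  exact fun ht => (card_le_one_iff_subsingleton.1 (by omega)).pairwise _

end SimpleGraph

section Colex
variable {α : Type*} [LinearOrder α]

lemma toColex_compl_le_toColex_compl [Fintype α] [DecidableEq α] {s t : Finset α} :
    toColex sᶜ ≤ toColex tᶜ ↔ toColex t ≤ toColex s := by
  simp only [toColex_le_toColex, mem_compl, not_not]
  exact ⟨fun h a hat has => (h has hat).imp fun _ ⟨h₁, h₂, h₃⟩ => ⟨h₂, h₁, h₃⟩,
    fun h a has hat => (h hat has).imp fun _ ⟨h₁, h₂, h₃⟩ => ⟨h₂, h₁, h₃⟩⟩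

lemma toColex_compl_lt_toColex_compl [Fintype α] [DecidableEq α] {s t : Finset α} :
    toColex sᶜ < toColex tᶜ ↔ toColex t < toColex s := by
  simp only [lt_iff_le_not_ge, toColex_compl_le_toColex_compl]

lemma toColex_pair_lt_toColex_pair [DecidableEq α] {a b c d : α} (hab : a < b) (hcd : c < d) :
    toColex ({a, b} : Finset α) < toColex {c, d} ↔ b < d ∨ b = d ∧ a < c := by
  rw [toColex_lt_toColex_iff_exists_forall_lt]
  simp only [mem_insert, mem_singleton]
  constructor
  · rintro ⟨x, hx, hxab, hlt⟩
    have := hlt a; have := hlt b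
    grind
  · rintro (hbd | ⟨rfl, hac⟩)
    · exact ⟨d, Or.inr rfl, by grind, by grind⟩
    · exact ⟨c, Or.inl rfl, by grind, by grind⟩

end Colex

section RevCompl
variable {n : ℕ}

/-- `rev` is needed because `lexGraph` orders edges by their smaller endpoint first, while colex
compares largest elements first. -/
def revCompl (s : Finset (Fin n)) : Finset (Fin n) := (s.map Fin.revPerm.toEmbedding)ᶜ

@[simp] lemma mem_revCompl {s : Finset (Fin n)} {a : Fin n} : a ∈ revCompl s ↔ a.rev ∉ s := by
  simp [revCompl]

lemma revCompl_involutive : Function.Involutive (revCompl (n := n)) := fun s => by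
  ext; simp

lemma card_revCompl (s : Finset (Fin n)) : #(revCompl s) = n - #s := by
  simp [revCompl, card_compl]

lemma revCompl_subset_revCompl {s t : Finset (Fin n)} : revCompl s ⊆ revCompl t ↔ t ⊆ s := by
  simp [revCompl]

lemma revCompl_pair (a b : Fin n) : revCompl {a, b} = ({b.rev, a.rev} : Finset (Fin n))ᶜ := by
  simp [revCompl, pair_comm]

lemma toColex_revCompl_pair_lt {a b c d : Fin n} (hab : a < b) (hcd : c < d) :
    toColex (revCompl {a, b}) < toColex (revCompl {c, d}) ↔ a < c ∨ a = c ∧ b < d := by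
  rw [revCompl_pair, revCompl_pair, toColex_compl_lt_toColex_compl,
    toColex_pair_lt_toColex_pair (Fin.rev_lt_rev.2 hcd) (Fin.rev_lt_rev.2 hab)]
  simp only [Fin.rev_lt_rev, Fin.rev_inj, eq_comm]

end RevCompl

section KruskalKatona

variable {n : ℕ} (G : SimpleGraph (Fin n)) [DecidableRel G.Adj]

lemma sized_image_revCompl_edgeSets :
    (G.edgeSets.image revCompl : Set (Finset (Fin n))).Sized (n - 2) := by
  intro s hs
  obtain ⟨e, he, rfl⟩ := mem_image.1 (mem_coe.1 hs)
  rw [card_revCompl, card_of_mem_edgeSets he]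

lemma revCompl_mem_shadow_iterate_iff {k : ℕ} (hk : 2 ≤ k) {t : Finset (Fin n)} :
    revCompl t ∈ ∂^[k - 2] (G.edgeSets.image revCompl)
      ↔ #t = k ∧ ¬ G.IsIndepSet (t : Set (Fin n)) := by
  rw [mem_shadow_iterate_iff_exists_sdiff, not_isIndepSet_iff_exists_edgeSets_subset]
  have htn := t.card_le_univ.trans_eq (Fintype.card_fin n)
  constructor
  · rintro ⟨_, he', hte, hcard⟩
    obtain ⟨e, he, rfl⟩ := mem_image.1 he'
    rw [card_sdiff_of_subset hte, card_revCompl, card_revCompl, card_of_mem_edgeSets he] at hcard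
    rw [revCompl_subset_revCompl] at hte
    have := card_le_card hte
    rw [card_of_mem_edgeSets he] at this
    exact ⟨by omega, e, he, hte⟩
  · rintro ⟨htk, e, he, het⟩
    refine ⟨_, mem_image_of_mem _ he, revCompl_subset_revCompl.2 het, ?_⟩
    rw [card_sdiff_of_subset (revCompl_subset_revCompl.2 het), card_revCompl, card_revCompl,
      card_of_mem_edgeSets he]
    omega

lemma card_indepSetFinset_add_card_shadow_iterate {k : ℕ} (hk : 2 ≤ k) :
    #(G.indepSetFinset k) + #(∂^[k - 2] (G.edgeSets.image revCompl)) = n.choose k := by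
  have hshadow : ∂^[k - 2] (G.edgeSets.image revCompl) = ((powersetCard k univ).filter
      fun t : Finset (Fin n) => ¬ G.IsIndepSet (t : Set (Fin n))).image revCompl := by
    ext u
    obtain ⟨t, rfl⟩ := revCompl_involutive.surjective u
    rw [revCompl_mem_shadow_iterate_iff G hk, revCompl_involutive.injective.mem_finset_image]
    simp [mem_powersetCard]
  have hindep : G.indepSetFinset k
      = (powersetCard k univ).filter fun t : Finset (Fin n) => G.IsIndepSet (t : Set (Fin n)) := by
    ext t
    simp [isNIndepSet_iff, and_comm]
  rw [hshadow, card_image_of_injective _ revCompl_involutive.injective, hindep,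
    card_filter_add_card_filter_not, card_powersetCard, card_univ, Fintype.card_fin]

end KruskalKatona

/-- The position of the pair `{a, b}` in the lexicographic enumeration of pairs of `Fin n`, as it
appears in `lexGraph`. -/
def lexRank (n a b : ℕ) : ℕ :=
  min a b * (n - 1) - min a b * (min a b - 1) / 2 + (max a b - min a b - 1)

lemma lexGraph_adj {n m : ℕ} {a b : Fin n} :
    (lexGraph n m).Adj a b ↔ a ≠ b ∧ lexRank n a b < m := Iff.rfl

lemma sum_range_sub_one_sub_eq {n a : ℕ} (ha : a ≤ n) :
    ∑ i ∈ range a, (n - 1 - i) = a * (n - 1) - a * (a - 1) / 2 := by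
  induction a with
  | zero => simp
  | succ a ih =>
    rw [sum_range_succ, ih (by omega), Nat.triangle_succ, add_mul, one_mul]
    have : a * (a - 1) / 2 ≤ a * (n - 1) :=
      (Nat.div_le_self _ _).trans (Nat.mul_le_mul_left _ (by omega))
    omega

lemma lexRank_of_lt {n a b : ℕ} (hab : a < b) (hb : b ≤ n) :
    lexRank n a b = ∑ i ∈ range a, (n - 1 - i) + (b - a - 1) := by
  rw [lexRank, min_eq_left hab.le, max_eq_right hab.le, sum_range_sub_one_sub_eq (by omega)]

lemma lexRank_lt_lexRank {n a b c d : ℕ} (hab : a < b) (hb : b < n) (hcd : c < d) (hd : d < n)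
    (h : a < c ∨ a = c ∧ b < d) : lexRank n a b < lexRank n c d := by
  rw [lexRank_of_lt hab hb.le, lexRank_of_lt hcd hd.le]
  rcases h with hac | ⟨rfl, hbd⟩
  · have : ∑ i ∈ range (a + 1), (n - 1 - i) ≤ ∑ i ∈ range c, (n - 1 - i) :=
      sum_le_sum_of_subset (range_subset_range.2 hac)
    rw [sum_range_succ] at this
    omega
  · omega

lemma eq_and_eq_of_lexRank_eq {n a b c d : ℕ} (hab : a < b) (hb : b < n) (hcd : c < d)
    (hd : d < n) (h : lexRank n a b = lexRank n c d) : a = c ∧ b = d := by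
  rcases lt_trichotomy a c with hac | rfl | hac
  · exact absurd h (lexRank_lt_lexRank hab hb hcd hd (.inl hac)).ne
  · rcases lt_trichotomy b d with hbd | rfl | hbd
    · exact absurd h (lexRank_lt_lexRank hab hb hcd hd (.inr ⟨rfl, hbd⟩)).ne
    · exact ⟨rfl, rfl⟩
    · exact absurd h (lexRank_lt_lexRank hcd hd hab hb (.inr ⟨rfl, hbd⟩)).ne'
  · exact absurd h (lexRank_lt_lexRank hcd hd hab hb (.inl hac)).ne'

section LexGraph
variable {n m : ℕ}

instance : DecidableRel (lexGraph n m).Adj := fun _ _ =>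
  decidable_of_iff _ lexGraph_adj.symm

lemma inf_lt_sup_and_lexRank_lt_of_mem_edgeFinset {e : Sym2 (Fin n)}
    (he : e ∈ (lexGraph n m).edgeFinset) : e.inf < e.sup ∧ lexRank n e.inf e.sup < m := by
  induction e using Sym2.ind
  rw [mem_edgeFinset, mem_edgeSet, lexGraph_adj] at he
  exact ⟨inf_lt_sup.2 he.1, by simpa [lexRank] using he.2⟩

lemma card_edgeFinset_lexGraph_le : #(lexGraph n m).edgeFinset ≤ m := by
  simpa using card_le_card_of_injOn (t := range m)
    (fun e : Sym2 (Fin n) => lexRank n e.inf e.sup)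
    (fun e he => mem_range.2 (inf_lt_sup_and_lexRank_lt_of_mem_edgeFinset he).2)
    fun e he e' he' h => by
      obtain ⟨hlt, -⟩ := inf_lt_sup_and_lexRank_lt_of_mem_edgeFinset he
      obtain ⟨hlt', -⟩ := inf_lt_sup_and_lexRank_lt_of_mem_edgeFinset he'
      obtain ⟨h₁, h₂⟩ := eq_and_eq_of_lexRank_eq hlt e.sup.isLt hlt' e'.sup.isLt h
      exact Sym2.inf_eq_inf_and_sup_eq_sup.1 ⟨Fin.ext h₁, Fin.ext h₂⟩

lemma isInitSeg_image_revCompl_edgeSets_lexGraph :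
    IsInitSeg ((lexGraph n m).edgeSets.image revCompl) (n - 2) := by
  refine ⟨sized_image_revCompl_edgeSets _, ?_⟩
  rintro _ t hs ⟨hlt, ht⟩
  obtain ⟨_, he, rfl⟩ := mem_image.1 hs
  obtain ⟨a, b, hab, hadj, rfl⟩ := mem_edgeSets_iff_exists_lt.1 he
  obtain ⟨u, rfl⟩ := revCompl_involutive.surjective t
  have hu : #u = 2 := by
    have := u.card_le_univ.trans_eq (Fintype.card_fin n)
    have := b.isLt
    rw [card_revCompl] at ht
    omega
  obtain ⟨c, d, hcd, rfl⟩ : ∃ c d, c < d ∧ {c, d} = u := by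
    obtain ⟨x, y, hxy, rfl⟩ := card_eq_two.1 hu
    rcases hxy.lt_or_gt with h | h
    · exact ⟨x, y, h, rfl⟩
    · exact ⟨y, x, h, pair_comm _ _⟩
  rw [toColex_revCompl_pair_lt hcd hab] at hlt
  have hrank :=
    (lexRank_lt_lexRank hcd d.isLt hab b.isLt (by omega)).trans (lexGraph_adj.1 hadj).2
  exact mem_image_of_mem _
    (mem_edgeSets_iff_exists_lt.2 ⟨c, d, hcd, lexGraph_adj.2 ⟨hcd.ne, hrank⟩, rfl⟩)

end LexGraph

theorem card_indepSetFinset_le_lexGraph {n m : ℕ} (G : SimpleGraph (Fin n)) [DecidableRel G.Adj]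
    (hm : m ≤ #G.edgeFinset) (k : ℕ) :
    #(G.indepSetFinset k) ≤ #((lexGraph n m).indepSetFinset k) := by
  rcases lt_or_ge k 2 with hk | hk
  · rw [card_indepSetFinset_of_lt_two G hk, card_indepSetFinset_of_lt_two _ hk]
  have hcard : #((lexGraph n m).edgeSets.image revCompl) ≤ #(G.edgeSets.image revCompl) := by
    rw [card_image_of_injective _ revCompl_involutive.injective,
      card_image_of_injective _ revCompl_involutive.injective, card_edgeSets, card_edgeSets]
    exact card_edgeFinset_lexGraph_le.trans hm
  have hshadow := iterated_kk (k := k - 2) (sized_image_revCompl_edgeSets G) hcard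
    isInitSeg_image_revCompl_edgeSets_lexGraph
  have hG := card_indepSetFinset_add_card_shadow_iterate G hk
  have hL := card_indepSetFinset_add_card_shadow_iterate (lexGraph n m) hk
  omega

theorem homCount_loopedSplit_le_lex_general (n m p q : ℕ)
    (G : SimpleGraph (Fin n)) (hm : edgeCount G = m) :
    homCount G (fun x y : Fin (p + q) => x.val < p ∨ y.val < p)
      ≤ homCount (lexGraph n m) (fun x y : Fin (p + q) => x.val < p ∨ y.val < p) := by
  classical
  have hsplit : (fun x y : Fin (p + q) => x.val < p ∨ y.val < p) = splitAdj {x | p ≤ x.val} := by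
    ext x y
    simp [splitAdj]
  have hm' : m ≤ #G.edgeFinset := by
    rw [← hm, edgeCount, edgeFinset_card, Nat.card_eq_fintype_card]
  rw [hsplit, homCount_splitAdj, homCount_splitAdj]
  exact sum_le_sum fun k _ => Nat.mul_le_mul_right _ (card_indepSetFinset_le_lexGraph G hm' k)

/-- For `p, q ≥ 1`, homomorphisms into the clique-looped split graph `S°(p,q)`
are maximized by the lex graph among graphs with `n` vertices and `m` edges. -/
theorem homCount_loopedSplit_le_lex (n m p q : ℕ) (hp : 1 ≤ p) (hq : 1 ≤ q)
    (G : SimpleGraph (Fin n)) (hm : edgeCount G = m) :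
    homCount G (fun x y : Fin (p + q) => x.val < p ∨ y.val < p)
      ≤ homCount (lexGraph n m) (fun x y : Fin (p + q) => x.val < p ∨ y.val < p) :=
  homCount_loopedSplit_le_lex_general n m p q G hm
end

section
/- For every positive integer m, ℓ(m) ≤ (5 + √(9+24m))/2, where ℓ(m) is the maximum q such that the graph L(q,m) ∪ E_{m+1-q} maximizes hom(·,J) among graphs on m+1 vertices with m edges. -/
/-!
For a graph without isolated vertices, a homomorphism to `J` never uses the isolated vertex of
`J`, and it is determined by the preimage of the unlooped vertex, which can be any independent
set. Writing `m = C(k,2) + k(q-k) + w` with `0 ≤ w ≤ q-k-2`, the lex graph `L(q,m)` has `k`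
dominating vertices, one more vertex joined to `w` of the remaining ones, and no further edges, so
`hom(L(q,m) ∪ E_c, J) = 3^c (2^(q-k-1) + 2^(q-k-w-1) + k)`.
If `q > (5 + √(9+24m))/2`, then `q ≥ 3k + 6`, and moving two vertices of the lex component to
the isolated part gains the factor `9` while losing less than that on the lex component,
contradicting maximality.
-/

open Finset

section Homomorphisms

variable {V V' W : Type*} {G : SimpleGraph V} {G' : SimpleGraph V'}

lemma homCount_congr (f : G ≃g G') (H : W → W → Prop) : homCount G H = homCount G' H :=
  Nat.card_congr
    { toFun φ := ⟨φ.1 ∘ f.symm, fun a b hab => φ.2 _ _ (f.symm.map_adj_iff.mpr hab)⟩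
      invFun ψ := ⟨ψ.1 ∘ f, fun a b hab => ψ.2 _ _ (f.map_adj_iff.mpr hab)⟩
      left_inv φ := Subtype.ext (funext fun v => by simp)
      right_inv ψ := Subtype.ext (funext fun v => by simp) }

lemma edgeCount_congr (f : G ≃g G') : edgeCount G = edgeCount G' :=
  Nat.card_congr f.mapEdgeSet

lemma addIsolates_eq_map (G : SimpleGraph V) (r : ℕ) :
    addIsolates G r = G.map Function.Embedding.inl := by
  ext x y
  simp only [addIsolates, SimpleGraph.map_adj, Function.Embedding.inl_apply]
  constructor
  · rintro ⟨a, b, rfl, rfl, hab⟩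
    exact ⟨a, b, hab, rfl, rfl⟩
  · rintro ⟨a, b, hab, rfl, rfl⟩
    exact ⟨a, b, rfl, rfl, hab⟩

lemma edgeCount_addIsolates (G : SimpleGraph V) (r : ℕ) :
    edgeCount (addIsolates G r) = edgeCount G := by
  rw [addIsolates_eq_map, edgeCount, SimpleGraph.edgeSet_map,
    Nat.card_image_of_injective Function.Embedding.inl.sym2Map.injective, edgeCount]

lemma homCount_addIsolates (G : SimpleGraph V) (H : W → W → Prop) (r : ℕ) :
    homCount (addIsolates G r) H = homCount G H * Nat.card W ^ r := by
  let e : {f : V ⊕ Fin r → W // ∀ a b, (addIsolates G r).Adj a b → H (f a) (f b)}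
      ≃ {g : V → W // ∀ a b, G.Adj a b → H (g a) (g b)} × (Fin r → W) :=
    { toFun f := (⟨f.1 ∘ Sum.inl, fun a b hab => f.2 _ _ ⟨a, b, rfl, rfl, hab⟩⟩,
        f.1 ∘ Sum.inr)
      invFun g := ⟨Sum.elim g.1.1 g.2, by
        rintro _ _ ⟨a, b, rfl, rfl, hab⟩
        exact g.1.2 a b hab⟩
      left_inv f := Subtype.ext (Sum.elim_comp_inl_inr f.1)
      right_inv g := rfl }
  rw [homCount, Nat.card_congr e, Nat.card_prod, Nat.card_fun, Nat.card_fin, homCount]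

lemma homCount_Jrel_eq_indCount [Fintype V] (hG : ∀ v, ∃ u, G.Adj v u) :
    homCount G Jrel = indCount G := by
  classical
  refine Nat.card_congr
    { toFun f := ⟨univ.filter (f.1 · = 1), fun a ha b hb hab => ?_⟩
      invFun s := ⟨fun v => if v ∈ s.1 then 1 else 2, fun a b hab => ?_⟩
      left_inv f := Subtype.ext (funext fun v => ?_)
      right_inv s := Subtype.ext (by ext; simp) }
  · have := f.2 a b hab
    simp only [mem_filter, mem_univ, true_and] at ha hb
    simp [ha, hb, Jrel] at this
  · by_cases ha : a ∈ s.1 <;> by_cases hb : b ∈ s.1 <;> simp only [ha, hb, if_true, if_false]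
    exacts [absurd hab (s.2 a ha b hb), Or.inl ⟨rfl, rfl⟩, Or.inr (Or.inl ⟨rfl, rfl⟩),
      Or.inr (Or.inr ⟨rfl, rfl⟩)]
  · obtain ⟨u, hu⟩ := hG v
    have hv : f.1 v ≠ 0 := by
      rcases f.2 v u hu with ⟨h, -⟩ | ⟨h, -⟩ | ⟨h, -⟩ <;> simp [h]
    simp only [mem_filter, mem_univ, true_and]
    split_ifs with h
    · exact h.symm
    · omega

end Homomorphisms

/-- The number of pairs `i < j` in `Fin n` with `i < a`, i.e. the position of the pair
`(a, a + 1)` in lexicographic order. -/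
def lexRowStart (n a : ℕ) : ℕ := ∑ i ∈ range a, (n - 1 - i)

section LexRowStart

variable {n a j a' j' i : ℕ}

lemma lexRowStart_succ (n a : ℕ) : lexRowStart n (a + 1) = lexRowStart n a + (n - 1 - a) :=
  sum_range_succ _ a

lemma lexRowStart_succ_succ (n a : ℕ) : lexRowStart (n + 1) (a + 1) = n + lexRowStart n a := by
  rw [lexRowStart, sum_range_succ', add_comm]
  exact congrArg₂ _ rfl (sum_congr rfl fun i _ => by omega)

lemma lexRowStart_mono (n : ℕ) : Monotone (lexRowStart n) :=
  fun _ _ h => sum_le_sum_of_subset (range_subset_range.mpr h)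

lemma two_mul_lexRowStart (h : a ≤ n) : 2 * lexRowStart n a + a * a + a = 2 * (a * n) := by
  induction a with
  | zero => simp [lexRowStart]
  | succ a ih =>
    have := ih (by omega)
    have : n - 1 - a + (a + 1) = n := by omega
    rw [lexRowStart_succ]
    nlinarith

lemma lexRowStart_eq (h : a ≤ n) : lexRowStart n a = a * (n - 1) - a * (a - 1) / 2 := by
  have h2 := two_mul_lexRowStart h
  have hc := Nat.div_two_mul_two_of_even (Nat.even_mul_pred_self a)
  rcases a with _ | a
  · simp [lexRowStart]
  obtain ⟨d, rfl⟩ : ∃ d, n = d + 1 := ⟨n - 1, by omega⟩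
  simp only [Nat.add_sub_cancel] at hc ⊢
  have : lexRowStart (d + 1) (a + 1) + (a + 1) * a / 2 = (a + 1) * d := by nlinarith
  omega

lemma lexRowStart_add_two (h : a ≤ n) : lexRowStart (n + 2) a = lexRowStart n a + 2 * a := by
  have := two_mul_lexRowStart h
  have := two_mul_lexRowStart (n := n + 2) (by omega : a ≤ n + 2)
  nlinarith

lemma exists_eq_lexRowStart_add (h : i < n.choose 2) :
    ∃ a j, a + j + 2 ≤ n ∧ i = lexRowStart n a + j := by
  induction n generalizing i with
  | zero => simp at h
  | succ n ih =>
    have hc : (n + 1).choose 2 = n + n.choose 2 := by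
      rw [Nat.choose_succ_succ', Nat.choose_one_right]
    rw [hc] at h
    by_cases hi : i < n
    · exact ⟨0, i, by omega, by simp [lexRowStart]⟩
    · obtain ⟨a, j, hj, hij⟩ := ih (i := i - n) (by omega)
      exact ⟨a + 1, j, by omega, by rw [lexRowStart_succ_succ]; omega⟩

lemma lexRowStart_add_lt_iff (h : a + j + 2 ≤ n) (h' : a' + j' + 2 ≤ n) :
    lexRowStart n a + j < lexRowStart n a' + j' ↔ a < a' ∨ a = a' ∧ j < j' := by
  rcases lt_trichotomy a a' with ha | rfl | ha
  · have := lexRowStart_mono n (by omega : a + 1 ≤ a')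
    have := lexRowStart_succ n a
    omega
  · omega
  · have := lexRowStart_mono n (by omega : a' + 1 ≤ a)
    have := lexRowStart_succ n a'
    omega

lemma lexRowStart_add_inj (h : a + j + 2 ≤ n) (h' : a' + j' + 2 ≤ n)
    (he : lexRowStart n a + j = lexRowStart n a' + j') : a = a' ∧ j = j' := by
  have := (lexRowStart_add_lt_iff h h').not.mp he.not_lt
  have := (lexRowStart_add_lt_iff h' h).not.mp he.not_gt
  omega

end LexRowStart

section LexGraph

variable {n m k w : ℕ}

lemma lexGraph_adj_iff (a b : Fin n) :
    (lexGraph n m).Adj a b ↔ a ≠ b ∧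
      lexRowStart n (min a b : ℕ) + (max (a : ℕ) b - min (a : ℕ) b - 1) < m := by
  simp only [lexGraph, lexRowStart_eq (by omega : min (a : ℕ) b ≤ n)]

lemma lexGraph_lexRowStart_add_adj_iff (hkw : k + w + 2 ≤ n) (a b : Fin n) :
    (lexGraph n (lexRowStart n k + w)).Adj a b ↔ a ≠ b ∧
      (min (a : ℕ) b < k ∨ min (a : ℕ) b = k ∧ max (a : ℕ) b ≤ k + w) := by
  rw [lexGraph_adj_iff]
  refine and_congr_right fun hab => ?_
  have hab : (a : ℕ) ≠ b := Fin.val_ne_of_ne hab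
  rw [lexRowStart_add_lt_iff (by omega) hkw]
  omega

lemma lexGraph_exists_adj (hn : 2 ≤ n) (hnm : n ≤ m + 1) (v : Fin n) :
    ∃ u, (lexGraph n m).Adj v u := by
  have hzero (v u : Fin n) (hv : (v : ℕ) = 0) (hu : (u : ℕ) ≠ 0) :
      (lexGraph n m).Adj v u := by
    simp only [lexGraph_adj_iff, ne_eq, Fin.ext_iff, hv, Nat.zero_min, Nat.zero_max, lexRowStart,
      range_zero, sum_empty]
    omega
  by_cases hv : (v : ℕ) = 0
  · exact ⟨⟨1, by omega⟩, hzero _ _ hv one_ne_zero⟩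
  · exact ⟨⟨0, by omega⟩, (hzero _ _ rfl hv).symm⟩

lemma edgeCount_lexGraph (h : m ≤ n.choose 2) : edgeCount (lexGraph n m) = m := by
  let lexIndex (e : Sym2 (Fin n)) : ℕ := lexRowStart n e.inf + (e.sup - e.inf - 1)
  have hedge : ∀ e ∈ (lexGraph n m).edgeSet, (e.inf : ℕ) < e.sup ∧ lexIndex e < m := by
    intro e
    induction e using Sym2.ind with
    | _ a b =>
      rw [SimpleGraph.mem_edgeSet, lexGraph_adj_iff]
      rintro ⟨hab, hlt⟩
      have := Fin.val_ne_of_ne hab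
      simp only [lexIndex, Sym2.inf_mk, Sym2.sup_mk, Fin.coe_min, Fin.coe_max]
      omega
  let f (e : (lexGraph n m).edgeSet) : Fin m := ⟨lexIndex e, (hedge e e.2).2⟩
  have hf : f.Bijective := by
    constructor
    · intro x y hxy
      have := (hedge x x.2).1
      have := (hedge y y.2).1
      have := x.1.sup.isLt
      have := y.1.sup.isLt
      obtain ⟨hinf, hsup⟩ := lexRowStart_add_inj (by omega) (by omega)
        (show lexIndex x = lexIndex y from congrArg Fin.val hxy)
      exact Subtype.ext (Sym2.inf_eq_inf_and_sup_eq_sup.mp ⟨Fin.ext hinf, Fin.ext (by omega)⟩)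
    · intro i
      obtain ⟨a, j, hj, hi⟩ := exists_eq_lexRowStart_add (i.2.trans_le h)
      have hle : a ≤ a + j + 1 := by omega
      have hadj : (lexGraph n m).Adj ⟨a, by omega⟩ ⟨a + j + 1, by omega⟩ := by
        simp only [lexGraph_adj_iff, ne_eq, Fin.ext_iff, min_eq_left hle, max_eq_right hle]
        omega
      refine ⟨⟨s(_, _), hadj⟩, Fin.ext ?_⟩
      simp only [f, lexIndex, hi, Sym2.inf_mk, Sym2.sup_mk, Fin.coe_min, Fin.coe_max,
        min_eq_left hle, max_eq_right hle]
      omega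
  rw [edgeCount, Nat.card_eq_of_bijective f hf, Nat.card_eq_fintype_card, Fintype.card_fin]

lemma homCount_addIsolates_lexGraph (hn : 2 ≤ n) (hnm : n ≤ m + 1) (r : ℕ) :
    homCount (addIsolates (lexGraph n m) r) Jrel = indCount (lexGraph n m) * 3 ^ r := by
  rw [homCount_addIsolates, homCount_Jrel_eq_indCount (lexGraph_exists_adj hn hnm),
    Nat.card_eq_fintype_card, Fintype.card_fin]

lemma indep_lexGraph_lexRowStart_add_iff (hkw : k + w + 2 ≤ n) {K L : Fin n}
    (hK : (K : ℕ) = k) (hL : (L : ℕ) = k + w) (s : Finset (Fin n)) :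
    (∀ a ∈ s, ∀ b ∈ s, ¬ (lexGraph n (lexRowStart n k + w)).Adj a b) ↔
      s ∈ ((Iio K).image singleton ∪ (Ioi K).powerset) ∪ (Ioi L).powerset.image (insert K) := by
  simp only [mem_union, mem_image, mem_powerset, subset_iff, mem_Iio, mem_Ioi, Fin.lt_def,
    lexGraph_lexRowStart_add_adj_iff hkw, not_and, not_or]
  constructor
  · intro hs
    by_cases hlow : ∃ a ∈ s, (a : ℕ) < k
    · obtain ⟨a, ha, hak⟩ := hlow
      refine Or.inl (Or.inl ⟨a, by omega, ?_⟩)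
      ext b
      simp only [mem_singleton]
      refine ⟨by rintro rfl; exact ha, fun hb => by_contra fun hba => ?_⟩
      exact (hs a ha b hb (Ne.symm hba)).1 (by omega)
    push Not at hlow
    by_cases hKs : K ∈ s
    · refine Or.inr ⟨s.erase K, fun b hb => ?_, insert_erase hKs⟩
      obtain ⟨hbK, hb⟩ := mem_erase.mp hb
      have hbk : (b : ℕ) ≠ k := fun h => hbK (Fin.ext (h.trans hK.symm))
      have := hlow b hb
      have := (hs K hKs b hb hbK.symm).2
      omega
    · refine Or.inl (Or.inr fun b hb => ?_)
      have hbk : (b : ℕ) ≠ k := fun h => hKs (Fin.ext (h.trans hK.symm) ▸ hb)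
      have := hlow b hb
      omega
  · rintro ((⟨a, ha, rfl⟩ | hs) | ⟨t, ht, rfl⟩) a' ha' b hb hab
    · simp only [mem_singleton] at ha' hb
      exact absurd (ha'.trans hb.symm) hab
    · have := hs ha'
      have := hs hb
      omega
    · simp only [mem_insert] at ha' hb
      rcases ha' with rfl | ha' <;> rcases hb with rfl | hb
      · exact absurd rfl hab
      · have := ht hb
        omega
      · have := ht ha'
        omega
      · have := ht ha'
        have := ht hb
        omega

lemma indCount_lexGraph_lexRowStart_add (hkw : k + w + 2 ≤ n) :
    indCount (lexGraph n (lexRowStart n k + w)) = 2 ^ (n - k - 1) + 2 ^ (n - k - w - 1) + k := by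
  classical
  obtain ⟨K, hK⟩ : ∃ K : Fin n, (K : ℕ) = k := ⟨⟨k, by omega⟩, rfl⟩
  obtain ⟨L, hL⟩ : ∃ L : Fin n, (L : ℕ) = k + w := ⟨⟨k + w, by omega⟩, rfl⟩
  have hKt : ∀ t ∈ (Ioi L).powerset, K ∉ t := fun t ht hKt => by
    have := mem_Ioi.mp (mem_powerset.mp ht hKt)
    rw [Fin.lt_def] at this
    omega
  have hd1 : Disjoint ((Iio K).image singleton) (Ioi K).powerset := by
    simp only [disjoint_left, mem_image, mem_powerset, mem_Iio]
    rintro _ ⟨a, ha, rfl⟩ h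
    exact lt_asymm ha (mem_Ioi.mp (h (mem_singleton_self a)))
  have hd2 : Disjoint ((Iio K).image singleton ∪ (Ioi K).powerset)
      ((Ioi L).powerset.image (insert K)) := by
    simp only [disjoint_right, mem_image, mem_union, mem_powerset, mem_Iio, not_or]
    rintro _ ⟨t, -, rfl⟩
    refine ⟨?_, fun h => lt_irrefl K (mem_Ioi.mp (h (mem_insert_self K t)))⟩
    rintro ⟨a, ha, hat⟩
    exact ha.ne (mem_singleton.mp (hat ▸ mem_insert_self K t)).symm
  have hinj : Set.InjOn (insert K) ((Ioi L).powerset : Set (Finset (Fin n))) :=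
    fun t ht t' ht' h => by
      rw [← erase_insert (hKt t ht), ← erase_insert (hKt t' ht'), h]
  rw [indCount, Nat.card_eq_fintype_card,
    Fintype.card_of_subtype _ fun s => (indep_lexGraph_lexRowStart_add_iff hkw hK hL s).symm,
    card_union_of_disjoint hd2,
    card_union_of_disjoint hd1, card_image_of_injective _ singleton_injective,
    card_image_of_injOn hinj, card_powerset, card_powerset, Fin.card_Iio, Fin.card_Ioi,
    Fin.card_Ioi, hK, hL, Nat.sub_right_comm n 1 k, Nat.sub_right_comm n 1 (k + w),
    Nat.sub_sub n k w]
  ring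

lemma indCount_lexGraph_lt_nine_mul (hk : 1 ≤ k) (hkw : k + w + 2 ≤ n) (hn : 3 * k + 6 ≤ n) :
    indCount (lexGraph n (lexRowStart n k + w)) <
      9 * indCount (lexGraph (n - 2) (lexRowStart n k + w)) := by
  obtain ⟨n, rfl⟩ : ∃ n', n = n' + 2 := ⟨n - 2, by omega⟩
  rw [indCount_lexGraph_lexRowStart_add hkw, Nat.add_sub_cancel, lexRowStart_add_two (by omega)]
  -- The smaller lex graph has parameters `(k, w + 2k)` if `w + 3k + 2 ≤ n`,
  -- and `(k + 1, w + 3k + 1 - n)` otherwise.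
  rcases le_or_gt (w + 3 * k + 2) n with h | h
  · rw [add_assoc (lexRowStart n k), indCount_lexGraph_lexRowStart_add (by omega)]
    have : 2 ^ (n + 2 - k - 1) = 4 * 2 ^ (n - k - 1) := by
      rw [show n + 2 - k - 1 = n - k - 1 + 2 by omega, pow_add]; ring
    have : 2 ^ (n + 2 - k - w - 1) ≤ 2 ^ (n + 2 - k - 1) :=
      Nat.pow_le_pow_right two_pos (by omega)
    refine lt_of_lt_of_le ?_ (Nat.mul_le_mul_left 9 (Nat.add_le_add_right (Nat.le_add_right _ _) _))
    omega
  · rw [show lexRowStart n k + 2 * k + w = lexRowStart n (k + 1) + (w + 3 * k + 1 - n) by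
      rw [lexRowStart_succ]; omega, indCount_lexGraph_lexRowStart_add (by omega)]
    have : 2 ^ (n + 2 - k - 1) = 8 * 2 ^ (n - (k + 1) - 1) := by
      rw [show n + 2 - k - 1 = n - (k + 1) - 1 + 3 by omega, pow_add]; ring
    have : 2 ^ (n + 2 - k - w - 1) ≤ 2 ^ (n - (k + 1) - 1) :=
      Nat.pow_le_pow_right two_pos (by omega)
    refine lt_of_lt_of_le ?_ (Nat.mul_le_mul_left 9 (Nat.add_le_add_right (Nat.le_add_right _ _) _))
    omega

end LexGraph

lemma le_five_add_sqrt_div_two {m q : ℕ} (h : q * q + 4 ≤ 5 * q + 6 * m) :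
    (q : ℝ) ≤ (5 + √(9 + 24 * m)) / 2 := by
  have hsq : ((2 * q - 5 : ℝ)) ^ 2 ≤ 9 + 24 * m := by
    have : (q : ℝ) * q + 4 ≤ 5 * q + 6 * m := by exact_mod_cast h
    nlinarith
  have := (le_abs_self _).trans (Real.abs_le_sqrt hsq)
  linarith

lemma lt_choose_two_sub_two {m q : ℕ} (hm : 1 ≤ m) (h : 5 * q + 6 * m < q * q + 4) :
    m < (q - 2).choose 2 := by
  obtain ⟨p, rfl⟩ : ∃ p, q = p + 2 := ⟨q - 2, by
    have : 2 ≤ q := by nlinarith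
    omega⟩
  rw [Nat.add_sub_cancel, Nat.choose_two_right,
    Nat.lt_div_iff_mul_lt' (Nat.even_mul_pred_self p).two_dvd]
  rcases p with _ | p
  · nlinarith
  · simp only [Nat.add_sub_cancel]
    nlinarith

lemma three_mul_add_six_le {k q : ℕ} (hk : 1 ≤ k) (hkq : k + 2 ≤ q)
    (h : 5 * q + 6 * lexRowStart q k < q * q + 4) : 3 * k + 6 ≤ q := by
  have := two_mul_lexRowStart (by omega : k ≤ q)
  by_contra! hq
  nlinarith

theorem ell_upper_bound_general (m q : ℕ) (hm : 1 ≤ m) (hq : q ≤ m + 1)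
    (hmax : ∀ G : SimpleGraph (Fin (m + 1)), edgeCount G = m →
      homCount G Jrel ≤ homCount (addIsolates (lexGraph q m) (m + 1 - q)) Jrel) :
    (q : ℝ) ≤ (5 + Real.sqrt (9 + 24 * m)) / 2 := by
  refine le_five_add_sqrt_div_two (not_lt.mp fun hlt => ?_)
  have hmq : m < (q - 2).choose 2 := lt_choose_two_sub_two hm hlt
  obtain ⟨k, w, hkw, hmkw⟩ :=
    exists_eq_lexRowStart_add (hmq.trans_le (Nat.choose_le_choose 2 (Nat.sub_le q 2)))
  have hk : 1 ≤ k := Nat.pos_of_ne_zero fun hk => by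
    simp only [hk, lexRowStart, range_zero, sum_empty, zero_add] at hmkw
    omega
  have hqk := three_mul_add_six_le (q := q) hk (by omega) (by omega)
  let e : Fin (q - 2) ⊕ Fin (m + 1 - (q - 2)) ≃ Fin (m + 1) :=
    finSumFinEquiv.trans (finCongr (by omega))
  have hle := hmax ((addIsolates (lexGraph (q - 2) m) _).map e) (by
    rw [← edgeCount_congr (SimpleGraph.Iso.map e _), edgeCount_addIsolates,
      edgeCount_lexGraph hmq.le])
  rw [← homCount_congr (SimpleGraph.Iso.map e _),
    homCount_addIsolates_lexGraph (by omega) (by omega),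
    homCount_addIsolates_lexGraph (by omega) hq,
    show m + 1 - (q - 2) = m + 1 - q + 2 by omega, pow_add] at hle
  have := hmkw ▸ indCount_lexGraph_lt_nine_mul hk hkw hqk
  nlinarith [pow_pos (by norm_num : 0 < 3) (m + 1 - q)]

/-- Upper bound on `ℓ(m)`: if `q` is the number of vertices of the lex component
of a `J`-extremal graph on `m+1` vertices and `m` edges, then
`q ≤ (5 + √(9+24m))/2`. -/
theorem ell_upper_bound (m q : ℕ) (hm : 1 ≤ m) (hq : q ≤ m + 1)
    (hq2 : m ≤ q.choose 2)
    (hmax : ∀ G : SimpleGraph (Fin (m + 1)), edgeCount G = m →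
      homCount G Jrel ≤ homCount (addIsolates (lexGraph q m) (m + 1 - q)) Jrel) :
    (q : ℝ) ≤ (5 + Real.sqrt (9 + 24 * m)) / 2 :=
  ell_upper_bound_general m q hm hq hmax
end
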